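/- arXiv:2008.09107 — 2 statements merged into one kernel-verified Lean document; each statement's English description precedes it below -/
import Mathlib

section
/- Let D be a finite digraph with root r, and let H be a subgraph of D. If for some vertex u ≠ r the maximum number of pairwise edge-disjoint r→u paths in H is strictly less than in D, then there exists an edge e ∈ E(D)\E(H) with head v such that for every set I of edges entering v which arises as the set of last edges of a system of pairwise edge-disjoint r→v paths in H, the set I+e arises as the set of last edges of a system of pairwise edge-disjoint r→v paths in H+e. -/
attribute [local instance] Classical.propDecidable

/-- A finite digraph: edges `E` with tail and head maps (parallel edges allowed). -/
structure Digraph' (V E : Type) where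
  tail : E → V
  head : E → V

namespace Digraph'

variable {V E : Type} [Fintype V] [Fintype E]

/-- `es` is a directed walk from `r` to `v`. -/
def IsWalk (D : Digraph' V E) : V → V → List E → Prop
  | r, v, [] => r = v
  | r, v, e :: es => D.tail e = r ∧ D.IsWalk (D.head e) v es

/-- `es` is a directed path from `r` to `v` using only edges of `F`. -/
def IsPathIn (D : Digraph' V E) (F : Set E) (r v : V) (es : List E) : Prop :=
  D.IsWalk r v es ∧ (∀ e ∈ es, e ∈ F) ∧ (r :: es.map D.head).Nodup

/-- The members of a list of paths are pairwise edge-disjoint. -/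
def EdgeDisjoint (P : List (List E)) : Prop :=
  P.Pairwise (fun p q => ∀ e, e ∈ p → e ∉ q)

/-- The maximum number of pairwise edge-disjoint `r → v` paths inside `F`. -/
noncomputable def lam (D : Digraph' V E) (F : Set E) (r v : V) : ℕ :=
  sSup {k | ∃ P : List (List E), P.length = k ∧ (∀ p ∈ P, D.IsPathIn F r v p) ∧
    EdgeDisjoint P}

/-- The set of edges of `F` whose head is `v`. -/
def inEdges (D : Digraph' V E) (F : Set E) (v : V) : Set E := {e ∈ F | D.head e = v}

/-- The in-degree of `v` in the subgraph `F`. -/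
noncomputable def indeg (D : Digraph' V E) (F : Set E) (v : V) : ℕ :=
  (D.inEdges F v).ncard

/-- `I` arises as the set of last edges of a system of pairwise edge-disjoint
`r → v` paths in `F` (membership in the gammoid `G_F(v)`). -/
def InGammoid (D : Digraph' V E) (F : Set E) (r v : V) (I : Set E) : Prop :=
  ∃ P : List (List E), (∀ p ∈ P, D.IsPathIn F r v p) ∧ EdgeDisjoint P ∧
    I = {e | ∃ p ∈ P, p.getLast? = some e}

/-- `F` is an `r`-flame: the in-degree of each `v ≠ r` equals λ_F(r,v). -/
def IsFlame (D : Digraph' V E) (r : V) (F : Set E) : Prop :=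
  ∀ v, v ≠ r → D.indeg F v = D.lam F r v

/-- Total of `x` on the in-edges of `v`. -/
noncomputable def inflow (D : Digraph' V E) (x : E → ℝ) (v : V) : ℝ :=
  ∑ e, if D.head e = v then x e else 0

/-- Total of `x` on the out-edges of `v`. -/
noncomputable def outflow (D : Digraph' V E) (x : E → ℝ) (v : V) : ℝ :=
  ∑ e, if D.tail e = v then x e else 0

/-- Total of `x` on the edges entering the vertex set `W`. -/
noncomputable def rhoSet (D : Digraph' V E) (x : E → ℝ) (W : Set V) : ℝ :=
  ∑ e, if D.head e ∈ W ∧ D.tail e ∉ W then x e else 0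

/-- `x` is a (nonnegative) `r → v` flow. -/
def IsFlow (D : Digraph' V E) (r v : V) (x : E → ℝ) : Prop :=
  (∀ e, 0 ≤ x e) ∧ (∀ u, u ≠ r → u ≠ v → D.inflow x u = D.outflow x u) ∧
    D.inflow x r = 0 ∧ D.outflow x v = 0

/-- The flow-connectivity from `r` to `v` under capacity `c`. -/
noncomputable def lamF (D : Digraph' V E) (r v : V) (c : E → ℝ) : ℝ :=
  sSup {a | ∃ x, D.IsFlow r v x ∧ x ≤ c ∧ D.outflow x r = a}

/-- Characteristic vector of an edge. -/
noncomputable def chi (e : E) : E → ℝ := fun e' => if e' = e then 1 else 0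

/-- Restriction of `x` to the in-edges of `v` (zero elsewhere). -/
noncomputable def restrictIn (D : Digraph' V E) (v : V) (x : E → ℝ) : E → ℝ :=
  fun e => if D.head e = v then x e else 0

/-- The polygammoid `G_c(v)`: restrictions to the in-edges of `v`
of `r → v` flows bounded by `c`. -/
def polygammoid (D : Digraph' V E) (r v : V) (c : E → ℝ) : Set (E → ℝ) :=
  {s | ∃ x, D.IsFlow r v x ∧ x ≤ c ∧ D.restrictIn v x = s}

/-- `D` has no parallel edges. -/
def NoParallel (D : Digraph' V E) : Prop :=
  ∀ e e', D.tail e = D.tail e' → D.head e = D.head e' → e = e'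

/-- `es` is a directed cycle. -/
def IsCycle (D : Digraph' V E) (es : List E) : Prop :=
  es ≠ [] ∧ ∃ u, D.IsWalk u u es ∧ (es.map D.head).Nodup

/-- Characteristic vector of a list of edges. -/
noncomputable def charVec (es : List E) : E → ℝ :=
  fun e => ((es.filter (fun e' => e' = e)).length : ℝ)

end Digraph'

/-! Menger's theorem for unit capacities, via augmenting paths. Choose `e ∉ H` entering `v` with
`λ_H(r,v) < λ_{H+e}(r,v)`; such an edge exists by submodularity of cut sizes. A system of paths
in `H` ending in `I` is an `r → v` flow of unit capacities. Augmenting it inside `H + e` never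
drops an edge entering `v`, so it grows into a maximum flow of `H + e` whose edges into `v`
contain `I`; this flow must use `e`, since its value exceeds `λ_H(r,v)`. Decomposing it into
paths and keeping those that end in `I + e` exhibits `I + e`. -/

open Finset

namespace Digraph'

variable {V E : Type} {G : Digraph' V E}

section Walks

variable {a b c : V} {es fs : List E}

theorem IsWalk.append (h₁ : G.IsWalk a b es) (h₂ : G.IsWalk b c fs) :
    G.IsWalk a c (es ++ fs) := by
  induction es generalizing a with
  | nil => cases h₁; exact h₂
  | cons e es ih => exact ⟨h₁.1, ih h₁.2⟩

theorem IsWalk.of_append (h : G.IsWalk a c (es ++ fs)) :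
    ∃ b, G.IsWalk a b es ∧ G.IsWalk b c fs := by
  induction es generalizing a with
  | nil => exact ⟨a, rfl, h⟩
  | cons e es ih =>
    obtain ⟨b, h₁, h₂⟩ := ih h.2
    exact ⟨b, ⟨h.1, h₁⟩, h₂⟩

theorem IsWalk.head_of_getLast? (h : G.IsWalk a b es) {e : E} (he : es.getLast? = some e) :
    G.head e = b := by
  induction es generalizing a with
  | nil => simp at he
  | cons f es ih =>
    rcases es with _ | ⟨g, es⟩
    · cases h.2; simp_all
    · exact ih h.2 (by simpa [List.getLast?_cons_cons] using he)

/-- Each vertex is entered as often as it is left, except at the two ends of the walk. -/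
theorem IsWalk.countP_head_add (h : G.IsWalk a b es) (w : V) :
    es.countP (fun e => G.head e = w) + (if a = w then 1 else 0) =
      es.countP (fun e => G.tail e = w) + (if b = w then 1 else 0) := by
  induction es generalizing a with
  | nil => cases h; simp
  | cons e es ih =>
    have := ih h.2
    simp only [List.countP_cons, h.1, decide_eq_true_eq]
    split_ifs at * <;> omega

theorem IsWalk.exists_path (h : G.IsWalk a b es) :
    ∃ fs, G.IsWalk a b fs ∧ (∀ e ∈ fs, e ∈ es) ∧ (a :: fs.map G.head).Nodup := by
  induction es generalizing a with
  | nil => exact ⟨[], h, by simp, by simp⟩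
  | cons e es ih =>
    obtain ⟨fs, hw, hsub, hnd⟩ := ih h.2
    by_cases ha : a ∈ G.head e :: fs.map G.head
    · rcases List.mem_cons.mp ha with ha | ha
      · exact ⟨fs, ha ▸ hw, fun x hx => List.mem_cons_of_mem _ (hsub x hx), ha ▸ hnd⟩
      · -- the walk returns to `a`: keep only the part after its last visit
        obtain ⟨g, hg, rfl⟩ := List.mem_map.mp ha
        obtain ⟨fs₁, fs₂, rfl⟩ := List.append_of_mem hg
        obtain ⟨m, -, hm⟩ := hw.of_append
        refine ⟨fs₂, hm.2, fun x hx => List.mem_cons_of_mem _ (hsub x (by simp [hx])), ?_⟩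
        exact (List.nodup_append.mp (by simpa using hnd :
          ((G.head e :: fs₁.map G.head) ++ (G.head g :: fs₂.map G.head)).Nodup)).2.1
    · exact ⟨e :: fs, ⟨h.1, hw⟩, by simpa using fun x hx => Or.inr (hsub x hx),
        List.nodup_cons.mpr ⟨ha, by simpa using hnd⟩⟩

end Walks

variable (G) in
noncomputable def inCard (A : Finset E) (w : V) : ℕ := #{e ∈ A | G.head e = w}

variable (G) in
noncomputable def outCard (A : Finset E) (w : V) : ℕ := #{e ∈ A | G.tail e = w}

/-- A `0/1` flow from `r` to `v`, given by its support. -/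
structure IsEdgeFlow (G : Digraph' V E) (r v : V) (A : Finset E) : Prop where
  inCard_eq_outCard : ∀ w, w ≠ r → w ≠ v → G.inCard A w = G.outCard A w
  outCard_sink : G.outCard A v = 0

section Counting

variable {A B : Finset E} {w : V}

theorem inCard_union (h : Disjoint A B) : G.inCard (A ∪ B) w = G.inCard A w + G.inCard B w := by
  rw [inCard, filter_union, card_union_of_disjoint (disjoint_filter_filter h)]; rfl

theorem outCard_union (h : Disjoint A B) :
    G.outCard (A ∪ B) w = G.outCard A w + G.outCard B w := by
  rw [outCard, filter_union, card_union_of_disjoint (disjoint_filter_filter h)]; rfl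

theorem inCard_eq_sdiff_add_inter (B : Finset E) :
    G.inCard A w = G.inCard (A \ B) w + G.inCard (A ∩ B) w := by
  rw [← inCard_union (disjoint_sdiff_inter A B), sdiff_union_inter]

theorem outCard_eq_sdiff_add_inter (B : Finset E) :
    G.outCard A w = G.outCard (A \ B) w + G.outCard (A ∩ B) w := by
  rw [← outCard_union (disjoint_sdiff_inter A B), sdiff_union_inter]

theorem inCard_toFinset {es : List E} (h : es.Nodup) :
    G.inCard es.toFinset w = es.countP (fun e => G.head e = w) := by
  rw [inCard, List.countP_eq_length_filter, ← List.toFinset_card_of_nodup (h.filter _),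
    List.toFinset_filter]
  simp

theorem outCard_toFinset {es : List E} (h : es.Nodup) :
    G.outCard es.toFinset w = es.countP (fun e => G.tail e = w) := by
  rw [outCard, List.countP_eq_length_filter, ← List.toFinset_card_of_nodup (h.filter _),
    List.toFinset_filter]
  simp

end Counting

namespace IsEdgeFlow

variable {r v : V} {A B : Finset E}

theorem empty : G.IsEdgeFlow r v ∅ := ⟨fun _ _ _ => rfl, rfl⟩

theorem union (hA : G.IsEdgeFlow r v A) (hB : G.IsEdgeFlow r v B) (h : Disjoint A B) :
    G.IsEdgeFlow r v (A ∪ B) where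
  inCard_eq_outCard w hwr hwv := by
    rw [inCard_union h, outCard_union h, hA.1 w hwr hwv, hB.1 w hwr hwv]
  outCard_sink := by rw [outCard_union h, hA.2, hB.2]

theorem sdiff (hA : G.IsEdgeFlow r v A) (hB : G.IsEdgeFlow r v B) (h : B ⊆ A) :
    G.IsEdgeFlow r v (A \ B) where
  inCard_eq_outCard w hwr hwv := by
    have h₁ := inCard_eq_sdiff_add_inter (G := G) (A := A) (w := w) B
    have h₂ := outCard_eq_sdiff_add_inter (G := G) (A := A) (w := w) B
    rw [inter_eq_right.mpr h] at h₁ h₂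
    have := hA.1 w hwr hwv; have := hB.1 w hwr hwv
    omega
  outCard_sink := by
    have h₂ := outCard_eq_sdiff_add_inter (G := G) (A := A) (w := v) B
    have := hA.2
    omega

end IsEdgeFlow

namespace IsPathIn

variable {F : Set E} {r v : V} {p : List E}

theorem nodup (hp : G.IsPathIn F r v p) : p.Nodup :=
  (List.nodup_cons.mp hp.2.2).2.of_map _

theorem ne_nil (hp : G.IsPathIn F r v p) (hv : v ≠ r) : p ≠ [] := by
  rintro rfl; exact hv hp.1.symm

theorem mem_and_head_eq_iff (hp : G.IsPathIn F r v p) {e : E} :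
    e ∈ p ∧ G.head e = v ↔ p.getLast? = some e := by
  refine ⟨fun ⟨he, hev⟩ => ?_, fun he => ⟨List.mem_of_getLast? he, hp.1.head_of_getLast? he⟩⟩
  have hne : p ≠ [] := List.ne_nil_of_mem he
  obtain ⟨f, hf⟩ := Option.isSome_iff_exists.mp (List.getLast?_isSome.mpr hne)
  rw [hf, List.inj_on_of_nodup_map (List.nodup_cons.mp hp.2.2).2 he (List.mem_of_getLast? hf)
    (hev.trans (hp.1.head_of_getLast? hf).symm)]

theorem inCard_toFinset_eq_one (hp : G.IsPathIn F r v p) (hv : v ≠ r) :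
    G.inCard p.toFinset v = 1 := by
  obtain ⟨f, hf⟩ := Option.isSome_iff_exists.mp (List.getLast?_isSome.mpr (hp.ne_nil hv))
  rw [inCard, card_eq_one]
  exact ⟨f, by ext e; simpa using hp.mem_and_head_eq_iff.trans (by rw [hf]; simp [eq_comm])⟩

theorem isEdgeFlow (hp : G.IsPathIn F r v p) (hv : v ≠ r) : G.IsEdgeFlow r v p.toFinset where
  inCard_eq_outCard w hwr hwv := by
    have := hp.1.countP_head_add w
    rw [inCard_toFinset hp.nodup, outCard_toFinset hp.nodup]
    simpa only [Ne.symm hwr, Ne.symm hwv, if_false, add_zero] using this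
  outCard_sink := by
    have := hp.1.countP_head_add v
    have h1 := hp.inCard_toFinset_eq_one hv
    rw [inCard_toFinset hp.nodup] at h1
    rw [outCard_toFinset hp.nodup]
    simp only [Ne.symm hv, if_false, if_true] at this
    omega

end IsPathIn

def lastEdges (P : List (List E)) : Set E := {e | ∃ p ∈ P, p.getLast? = some e}

theorem mem_lastEdges {P : List (List E)} {e : E} :
    e ∈ lastEdges P ↔ ∃ p ∈ P, p.getLast? = some e := Iff.rfl

variable (G) in
def IsPathSystem (F : Set E) (r v : V) (P : List (List E)) : Prop :=
  (∀ p ∈ P, G.IsPathIn F r v p) ∧ EdgeDisjoint P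

theorem inGammoid_iff {F : Set E} {r v : V} {I : Set E} :
    G.InGammoid F r v I ↔ ∃ P, G.IsPathSystem F r v P ∧ lastEdges P = I := by
  simp only [InGammoid, IsPathSystem, lastEdges, and_assoc, eq_comm]

namespace IsPathSystem

variable {F : Set E} {r v : V} {P : List (List E)}

theorem mono {F' : Set E} (hP : G.IsPathSystem F r v P) (h : F ⊆ F') :
    G.IsPathSystem F' r v P :=
  ⟨fun p hp => ⟨(hP.1 p hp).1, fun e he => h ((hP.1 p hp).2.1 e he), (hP.1 p hp).2.2⟩, hP.2⟩

theorem sublist {Q : List (List E)} (hP : G.IsPathSystem F r v P) (h : Q.Sublist P) :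
    G.IsPathSystem F r v Q :=
  ⟨fun p hp => hP.1 p (h.subset hp), hP.2.sublist h⟩

theorem coe_toFinset_flatten_subset (hP : G.IsPathSystem F r v P) :
    ↑P.flatten.toFinset ⊆ F := by
  intro e he
  obtain ⟨p, hp, hep⟩ := List.mem_flatten.mp (List.mem_toFinset.mp he)
  exact (hP.1 p hp).2.1 e hep

theorem filter_head_eq (hP : G.IsPathSystem F r v P) :
    ↑{e ∈ P.flatten.toFinset | G.head e = v} = lastEdges P := by
  ext e
  simp only [coe_filter, List.mem_toFinset, List.mem_flatten, lastEdges]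
  exact ⟨fun ⟨⟨p, hp, he⟩, hev⟩ => ⟨p, hp, (hP.1 p hp).mem_and_head_eq_iff.mp ⟨he, hev⟩⟩,
    fun ⟨p, hp, he⟩ => (fun h => ⟨⟨p, hp, h.1⟩, h.2⟩) ((hP.1 p hp).mem_and_head_eq_iff.mpr he)⟩

theorem isEdgeFlow (hP : G.IsPathSystem F r v P) (hv : v ≠ r) :
    G.IsEdgeFlow r v P.flatten.toFinset ∧ G.inCard P.flatten.toFinset v = P.length := by
  induction P with
  | nil => exact ⟨IsEdgeFlow.empty, rfl⟩
  | cons p P ih =>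
    have hp := hP.1 p List.mem_cons_self
    obtain ⟨hflow, hval⟩ := ih (hP.sublist (List.sublist_cons_self p P))
    have hdisj : Disjoint p.toFinset P.flatten.toFinset := by
      refine disjoint_left.mpr fun e hep heP => ?_
      obtain ⟨q, hq, heq⟩ := List.mem_flatten.mp (List.mem_toFinset.mp heP)
      exact (List.pairwise_cons.mp hP.2).1 q hq e (List.mem_toFinset.mp hep) heq
    rw [List.flatten_cons, List.toFinset_append]
    exact ⟨(hp.isEdgeFlow hv).union hflow hdisj, by
      rw [inCard_union hdisj, hp.inCard_toFinset_eq_one hv, hval, List.length_cons, add_comm]⟩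

end IsPathSystem

variable (G) in
noncomputable def crossOut (A : Finset E) (S : Finset V) : ℕ :=
  #{e ∈ A | G.tail e ∈ S ∧ G.head e ∉ S}

variable (G) in
noncomputable def crossIn (A : Finset E) (S : Finset V) : ℕ :=
  #{e ∈ A | G.tail e ∉ S ∧ G.head e ∈ S}

theorem sum_outCard_sub_inCard (A : Finset E) (S : Finset V) :
    ∑ w ∈ S, ((G.outCard A w : ℤ) - G.inCard A w) = G.crossOut A S - G.crossIn A S := by
  simp only [outCard, inCard, crossOut, crossIn, card_filter, Nat.cast_sum, Nat.cast_ite,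
    Nat.cast_one, Nat.cast_zero, ← sum_sub_distrib]
  rw [sum_comm]
  refine sum_congr rfl fun e _ => ?_
  rw [sum_sub_distrib, sum_ite_eq, sum_ite_eq]
  split_ifs <;> simp_all

theorem IsEdgeFlow.crossOut_eq [Fintype V] {r v : V} {A : Finset E} {S : Finset V}
    (hA : G.IsEdgeFlow r v A) (hrS : r ∈ S) (hvS : v ∉ S) :
    G.crossOut A S = G.inCard A v + G.crossIn A S := by
  have hsum : ∀ S : Finset V, r ∈ S → v ∉ S →
      ∑ w ∈ S, ((G.outCard A w : ℤ) - G.inCard A w) = G.outCard A r - G.inCard A r :=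
    fun S hrS hvS => sum_eq_single_of_mem r hrS fun w hw hwr => by
      rw [hA.1 w hwr (ne_of_mem_of_not_mem hw hvS), sub_self]
  have hvalue : (G.outCard A r : ℤ) - G.inCard A r = G.inCard A v := by
    have h := sum_outCard_sub_inCard (G := G) A univ
    rw [← add_sum_erase _ _ (mem_univ v), hsum _ (mem_erase.mpr
      ⟨ne_of_mem_of_not_mem hrS hvS, mem_univ r⟩) (notMem_erase v univ), hA.2] at h
    simp only [crossOut, crossIn, mem_univ, not_true_eq_false, and_false, false_and,
      filter_false, card_empty, CharP.cast_eq_zero, sub_self] at h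
    omega
  have := sum_outCard_sub_inCard (G := G) A S
  rw [hsum S hrS hvS] at this
  omega

variable (G) in
def Reaches (T : Set E) (a b : V) : Prop := ∃ es, G.IsWalk a b es ∧ ∀ e ∈ es, e ∈ T

namespace Reaches

variable {T : Set E} {a b : V}

theorem refl (a : V) : G.Reaches T a a := ⟨[], rfl, by simp⟩

theorem step (h : G.Reaches T a b) {e : E} (he : e ∈ T) (hb : G.tail e = b) :
    G.Reaches T a (G.head e) := by
  obtain ⟨es, hw, hT⟩ := h
  exact ⟨es ++ [e], hw.append ⟨hb, rfl⟩, by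
    simp only [List.mem_append, List.mem_singleton]
    exact fun x hx => hx.elim (hT x) fun h => h ▸ he⟩

theorem exists_isPathIn (h : G.Reaches T a b) : ∃ p, G.IsPathIn T a b p := by
  obtain ⟨es, hw, hT⟩ := h
  obtain ⟨p, hp, hsub, hnd⟩ := hw.exists_path
  exact ⟨p, hp, fun e he => hT e (hsub e he), hnd⟩

end Reaches

theorem crossOut_reachSet_eq_zero [Fintype V] (A : Finset E) {T : Set E} (hA : ↑A ⊆ T) (a : V) :
    G.crossOut A {w | G.Reaches T a w} = 0 := by
  refine card_eq_zero.mpr (filter_eq_empty_iff.mpr fun e he ⟨ht, hh⟩ => hh ?_)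
  simp only [mem_filter, mem_univ, true_and] at ht ⊢
  exact ht.step (hA he) rfl

namespace IsEdgeFlow

variable [Fintype V] {r v : V} {A : Finset E}

theorem reaches_of_inCard_pos (hA : G.IsEdgeFlow r v A) (h : 0 < G.inCard A v) :
    G.Reaches ↑A r v := by
  by_contra hn
  have := hA.crossOut_eq (S := {w | G.Reaches ↑A r w}) (by simpa using Reaches.refl r)
    (by simpa using hn)
  rw [crossOut_reachSet_eq_zero A subset_rfl] at this
  omega

theorem exists_isPathSystem (hA : G.IsEdgeFlow r v A) (hv : v ≠ r) :
    ∃ P, G.IsPathSystem ↑A r v P ∧ lastEdges P = ↑{e ∈ A | G.head e = v} := by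
  induction hn : G.inCard A v generalizing A with
  | zero =>
    refine ⟨[], ⟨by simp, List.Pairwise.nil⟩, ?_⟩
    rw [inCard, card_eq_zero] at hn
    simp [lastEdges, hn]
  | succ n ih =>
    obtain ⟨p, hp⟩ := (hA.reaches_of_inCard_pos (by omega)).exists_isPathIn
    have hpA : p.toFinset ⊆ A := fun e he => hp.2.1 e (List.mem_toFinset.mp he)
    have hcard := inCard_eq_sdiff_add_inter (G := G) (A := A) (w := v) p.toFinset
    rw [inter_eq_right.mpr hpA, hp.inCard_toFinset_eq_one hv] at hcard
    obtain ⟨P, hP, hlast⟩ := ih (hA.sdiff (hp.isEdgeFlow hv) hpA) (by omega)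
    refine ⟨p :: P, ⟨List.forall_mem_cons.mpr ⟨hp, (hP.mono ?_).1⟩, ?_⟩, ?_⟩
    · simp
    · refine List.pairwise_cons.mpr ⟨fun q hq e hep heq => ?_, hP.2⟩
      simpa [hep] using (hP.1 q hq).2.1 e heq
    · ext e
      have := Set.ext_iff.mp hlast e
      simp only [mem_lastEdges, mem_coe, mem_filter, mem_sdiff, List.mem_toFinset] at this ⊢
      simp only [List.mem_cons, exists_eq_or_imp, ← hp.mem_and_head_eq_iff, this]
      have hpA : e ∈ p → e ∈ A := hp.2.1 e
      tauto

end IsEdgeFlow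

variable (G) in
/-- With unit capacities every edge has exactly one residual direction: backwards on the
flow `A`, forwards elsewhere. -/
noncomputable def residual (A : Finset E) : Digraph' V E where
  tail e := if e ∈ A then G.head e else G.tail e
  head e := if e ∈ A then G.tail e else G.head e

section Residual

variable {A R : Finset E} {w : V}

theorem inCard_residual :
    (G.residual A).inCard R w = G.inCard (R \ A) w + G.outCard (R ∩ A) w := by
  rw [inCard_eq_sdiff_add_inter A, inCard, inCard, outCard, inCard]
  congr 2 <;> refine filter_congr fun e he => ?_ <;> simp_all [residual]

theorem outCard_residual :
    (G.residual A).outCard R w = G.outCard (R \ A) w + G.inCard (R ∩ A) w := by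
  rw [outCard_eq_sdiff_add_inter A, outCard, outCard, outCard, inCard]
  congr 2 <;> refine filter_congr fun e he => ?_ <;> simp_all [residual]

end Residual

open scoped symmDiff in
theorem IsEdgeFlow.augment {F : Set E} {r v : V} {A : Finset E} {p : List E}
    (hA : G.IsEdgeFlow r v A) (hAF : ↑A ⊆ F) (hv : v ≠ r)
    (hp : (G.residual A).IsPathIn F r v p) :
    G.IsEdgeFlow r v (A ∆ p.toFinset) ∧ ↑(A ∆ p.toFinset) ⊆ F ∧
      G.inCard (A ∆ p.toFinset) v = G.inCard A v + 1 ∧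
      {e ∈ A | G.head e = v} ⊆ A ∆ p.toFinset := by
  have hR := hp.isEdgeFlow hv
  have hRv := hp.inCard_toFinset_eq_one hv
  set R := p.toFinset
  have hdisj : Disjoint (A \ R) (R \ A) := disjoint_sdiff_sdiff
  have hcounts : ∀ w,
      G.inCard (A ∆ R) w = G.inCard (A \ R) w + G.inCard (R \ A) w ∧
      G.outCard (A ∆ R) w = G.outCard (A \ R) w + G.outCard (R \ A) w ∧
      G.inCard A w = G.inCard (A \ R) w + G.inCard (R ∩ A) w ∧
      G.outCard A w = G.outCard (A \ R) w + G.outCard (R ∩ A) w ∧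
      (G.residual A).inCard R w = G.inCard (R \ A) w + G.outCard (R ∩ A) w ∧
      (G.residual A).outCard R w = G.outCard (R \ A) w + G.inCard (R ∩ A) w := fun w =>
    ⟨by rw [Finset.symmDiff_def, inCard_union hdisj],
      by rw [Finset.symmDiff_def, outCard_union hdisj],
      by rw [inCard_eq_sdiff_add_inter R, inter_comm],
      by rw [outCard_eq_sdiff_add_inter R, inter_comm], inCard_residual, outCard_residual⟩
  have hsink := hcounts v
  have hinR : G.inCard (R ∩ A) v = 0 := by have := hR.2; omega
  refine ⟨⟨fun w hwr hwv => ?_, ?_⟩, fun e he => ?_, by have := hA.2; omega, fun e he => ?_⟩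
  · have := hcounts w; have := hA.1 w hwr hwv; have := hR.1 w hwr hwv
    omega
  · have := hA.2; have := hR.2; omega
  · rcases mem_symmDiff.mp he with ⟨he, -⟩ | ⟨he, -⟩
    exacts [hAF he, hp.2.1 e (List.mem_toFinset.mp he)]
  · obtain ⟨heA, hev⟩ := mem_filter.mp he
    have heR : e ∉ R := fun heR => by
      have : 0 < G.inCard (R ∩ A) v := card_pos.mpr ⟨e, by simp [heR, heA, hev]⟩
      omega
    exact mem_symmDiff.mpr (Or.inl ⟨heA, heR⟩)

section Connectivity

variable [Fintype E] {F : Set E} {r v : V}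

variable (G) in
noncomputable def cutVal (F : Set E) (S : Finset V) : ℕ :=
  #{e | e ∈ F ∧ G.tail e ∈ S ∧ G.head e ∉ S}

theorem crossOut_le_cutVal {A : Finset E} (hAF : ↑A ⊆ F) (S : Finset V) :
    G.crossOut A S ≤ G.cutVal F S :=
  card_le_card fun e he => by
    simp only [mem_filter, mem_univ, true_and] at he ⊢
    exact ⟨hAF he.1, he.2⟩

theorem cutVal_mono {F' : Set E} (h : F ⊆ F') (S : Finset V) : G.cutVal F S ≤ G.cutVal F' S :=
  card_le_card fun e he => by
    simp only [mem_filter, mem_univ, true_and] at he ⊢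
    exact ⟨h he.1, he.2⟩

theorem exists_of_cutVal_lt {F' : Set E} {S : Finset V} (h : G.cutVal F S < G.cutVal F' S) :
    ∃ e ∈ F', e ∉ F ∧ G.tail e ∈ S ∧ G.head e ∉ S := by
  by_contra! hno
  refine h.not_ge (card_le_card fun e he => ?_)
  simp only [mem_filter, mem_univ, true_and] at he ⊢
  exact ⟨by_contra fun heF => he.2.2 (hno e he.1 heF he.2.1), he.2⟩

theorem cutVal_lt_cutVal_insert {S : Finset V} {e : E} (he : e ∉ F) (ht : G.tail e ∈ S)
    (hh : G.head e ∉ S) : G.cutVal F S < G.cutVal (insert e F) S := by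
  refine card_lt_card ⟨fun x hx => ?_, fun h => he ?_⟩
  · simp only [mem_filter, mem_univ, true_and] at hx ⊢
    exact ⟨Set.mem_insert_of_mem e hx.1, hx.2⟩
  · simpa using (mem_filter.mp (h (by simp [ht, hh]))).2.1

theorem cutVal_inter_add_cutVal_union_le (F : Set E) (S T : Finset V) :
    G.cutVal F (S ∩ T) + G.cutVal F (S ∪ T) ≤ G.cutVal F S + G.cutVal F T := by
  simp only [cutVal, card_filter, ← sum_add_distrib]
  refine sum_le_sum fun e _ => ?_
  by_cases hF : e ∈ F <;> by_cases h₁ : G.tail e ∈ S <;> by_cases h₂ : G.tail e ∈ T <;>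
    by_cases h₃ : G.head e ∈ S <;> by_cases h₄ : G.head e ∈ T <;> simp [*]

theorem bddAbove_pathSystem_lengths (hv : v ≠ r) :
    BddAbove {k | ∃ P : List (List E), P.length = k ∧ G.IsPathSystem F r v P} := by
  refine ⟨Fintype.card E, fun k ⟨P, hk, hP⟩ => ?_⟩
  rw [← hk, ← (hP.isEdgeFlow hv).2]
  exact (card_filter_le _ _).trans (card_le_univ _)

theorem IsPathSystem.length_le_lam {P : List (List E)} (hP : G.IsPathSystem F r v P)
    (hv : v ≠ r) : P.length ≤ G.lam F r v :=
  le_csSup (bddAbove_pathSystem_lengths hv) ⟨P, rfl, hP⟩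

theorem exists_isPathSystem_length_eq_lam (hv : v ≠ r) :
    ∃ P, G.IsPathSystem F r v P ∧ P.length = G.lam F r v := by
  obtain ⟨P, hP, hsys⟩ := Nat.sSup_mem (s := {k | ∃ P : List (List E), P.length = k ∧
    G.IsPathSystem F r v P}) ⟨0, [], rfl, by simp, List.Pairwise.nil⟩
    (bddAbove_pathSystem_lengths hv)
  exact ⟨P, hsys, hP⟩

variable [Fintype V]

/-- The cut is the set of vertices that the residual digraph reaches from `r`. -/
theorem IsEdgeFlow.exists_cutVal_eq {A : Finset E} (hA : G.IsEdgeFlow r v A) (hAF : ↑A ⊆ F)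
    (hn : ¬ (G.residual A).Reaches F r v) :
    ∃ S : Finset V, r ∈ S ∧ v ∉ S ∧ G.cutVal F S = G.inCard A v := by
  set S : Finset V := {w | (G.residual A).Reaches F r w}
  have hS : ∀ w, w ∈ S ↔ (G.residual A).Reaches F r w := by simp [S]
  have hstep : ∀ e ∈ F, (G.residual A).tail e ∈ S → (G.residual A).head e ∈ S :=
    fun e he ht => (hS _).mpr (((hS _).mp ht).step he rfl)
  have hrS : r ∈ S := (hS r).mpr (Reaches.refl r)
  have hvS : v ∉ S := fun h => hn ((hS v).mp h)
  have hcrossIn : G.crossIn A S = 0 := by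
    refine card_eq_zero.mpr (filter_eq_empty_iff.mpr fun e he ⟨ht, hh⟩ => ht ?_)
    simpa [residual, he] using hstep e (hAF he) (by simpa [residual, he] using hh)
  have hcut : G.cutVal F S = G.crossOut A S := by
    refine congrArg card (ext fun e => ?_)
    simp only [mem_filter, mem_univ, true_and]
    refine ⟨fun ⟨heF, ht, hh⟩ => ⟨?_, ht, hh⟩, fun ⟨he, h⟩ => ⟨hAF he, h⟩⟩
    by_contra he
    exact hh (by simpa [residual, he] using hstep e heF (by simpa [residual, he] using ht))
  exact ⟨S, hrS, hvS, by rw [hcut, hA.crossOut_eq hrS hvS, hcrossIn, add_zero]⟩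

theorem IsEdgeFlow.inCard_le_lam {A : Finset E} (hA : G.IsEdgeFlow r v A) (hAF : ↑A ⊆ F)
    (hv : v ≠ r) : G.inCard A v ≤ G.lam F r v := by
  obtain ⟨P, hP, hlast⟩ := hA.exists_isPathSystem hv
  rw [← hP.filter_head_eq, coe_inj] at hlast
  rw [inCard, ← hlast, ← inCard, (hP.isEdgeFlow hv).2]
  exact (hP.mono hAF).length_le_lam hv

theorem lam_le_cutVal (hv : v ≠ r) {S : Finset V} (hrS : r ∈ S) (hvS : v ∉ S) :
    G.lam F r v ≤ G.cutVal F S := by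
  obtain ⟨P, hP, hlen⟩ := exists_isPathSystem_length_eq_lam (G := G) (F := F) hv
  obtain ⟨hA, hval⟩ := hP.isEdgeFlow hv
  calc G.lam F r v = G.inCard P.flatten.toFinset v := by rw [hval, hlen]
    _ ≤ G.crossOut P.flatten.toFinset S := by rw [hA.crossOut_eq hrS hvS]; omega
    _ ≤ G.cutVal F S := crossOut_le_cutVal hP.coe_toFinset_flatten_subset S

theorem IsEdgeFlow.exists_inCard_eq_lam {A : Finset E} (hA : G.IsEdgeFlow r v A)
    (hAF : ↑A ⊆ F) (hv : v ≠ r) :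
    ∃ A', G.IsEdgeFlow r v A' ∧ ↑A' ⊆ F ∧ G.inCard A' v = G.lam F r v ∧
      {e ∈ A | G.head e = v} ⊆ {e ∈ A' | G.head e = v} := by
  induction hk : G.lam F r v - G.inCard A v generalizing A with
  | zero => exact ⟨A, hA, hAF, by have := hA.inCard_le_lam hAF hv; omega, subset_rfl⟩
  | succ k ih =>
    have hreach : (G.residual A).Reaches F r v := by
      by_contra hn
      obtain ⟨S, hrS, hvS, hS⟩ := hA.exists_cutVal_eq hAF hn
      have := lam_le_cutVal (G := G) (F := F) hv hrS hvS
      omega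
    obtain ⟨p, hp⟩ := hreach.exists_isPathIn
    obtain ⟨hA', hA'F, hval, hsub⟩ := hA.augment hAF hv hp
    obtain ⟨A'', hA'', hA''F, hval'', hsub''⟩ := ih hA' hA'F (by omega)
    exact ⟨A'', hA'', hA''F, hval'',
      fun e he => hsub'' (mem_filter.mpr ⟨hsub he, (mem_filter.mp he).2⟩)⟩

theorem exists_cutVal_eq_lam (hv : v ≠ r) :
    ∃ S : Finset V, r ∈ S ∧ v ∉ S ∧ G.cutVal F S = G.lam F r v := by
  obtain ⟨A, hA, hAF, hval, -⟩ :=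
    (IsEdgeFlow.empty (G := G) (r := r) (v := v)).exists_inCard_eq_lam (F := F) (by simp) hv
  by_cases hreach : (G.residual A).Reaches F r v
  · obtain ⟨p, hp⟩ := hreach.exists_isPathIn
    obtain ⟨hA', hA'F, hval', -⟩ := hA.augment hAF hv hp
    have := hA'.inCard_le_lam hA'F hv
    omega
  · rw [← hval]
    exact hA.exists_cutVal_eq hAF hreach

/-- Of the minimum `r`–`u` cuts of `H` take an inclusion-minimal one `S`; some `e ∉ H` leaves
it. If adding `e` did not help, a minimum cut `T` of `H + e` for `head e` would avoid `tail e`,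
and submodularity would make `S ∩ T` a smaller minimum `r`–`u` cut. -/
theorem exists_lam_lt_lam_insert {H : Set E} {u : V} (hu : u ≠ r)
    (hlt : G.lam H r u < G.lam Set.univ r u) :
    ∃ e ∉ H, G.head e ≠ r ∧ G.lam H r (G.head e) < G.lam (insert e H) r (G.head e) := by
  by_contra! hno
  obtain ⟨S, ⟨hrS, huS, hS⟩, hmin⟩ := exists_minimal_of_wellFoundedLT
    (fun S : Finset V => r ∈ S ∧ u ∉ S ∧ G.cutVal H S = G.lam H r u) (exists_cutVal_eq_lam hu)
  obtain ⟨e, -, heH, htS, hhS⟩ := exists_of_cutVal_lt (G := G) (F := H) (F' := Set.univ) (S := S)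
    (by have := lam_le_cutVal (G := G) (F := Set.univ) hu hrS huS; omega)
  have hv : G.head e ≠ r := (ne_of_mem_of_not_mem hrS hhS).symm
  obtain ⟨T, hrT, hvT, hT⟩ := exists_cutVal_eq_lam (G := G) (F := insert e H) hv
  have hTH : G.cutVal H T = G.lam H r (G.head e) := by
    have := lam_le_cutVal (G := G) (F := H) hv hrT hvT
    have := cutVal_mono (G := G) (Set.subset_insert e H) T
    have := hno e heH hv
    omega
  have htT : G.tail e ∉ T := fun htT => by
    have := cutVal_lt_cutVal_insert (G := G) heH htT hvT
    have := hno e heH hv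
    omega
  have hsub := cutVal_inter_add_cutVal_union_le (G := G) H S T
  have h₁ := lam_le_cutVal (G := G) (F := H) hu (mem_inter.mpr ⟨hrS, hrT⟩)
    (fun h => huS (mem_inter.mp h).1)
  have h₂ := lam_le_cutVal (G := G) (F := H) hv (mem_union_left T hrS)
    (fun h => (mem_union.mp h).elim hhS hvT)
  have hST := hmin ⟨mem_inter.mpr ⟨hrS, hrT⟩, fun h => huS (mem_inter.mp h).1, by omega⟩
    inter_subset_left
  exact htT (mem_inter.mp (hST htS)).2

end Connectivity

theorem InGammoid.subset {F : Set E} {r v : V} {I J : Set E} (hI : G.InGammoid F r v I)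
    (hJ : J ⊆ I) : G.InGammoid F r v J := by
  obtain ⟨P, hP, rfl⟩ := inGammoid_iff.mp hI
  refine inGammoid_iff.mpr ⟨P.filter fun p => ∃ e ∈ J, p.getLast? = some e,
    hP.sublist List.filter_sublist, Set.ext fun e => ⟨?_, fun he => ?_⟩⟩
  · rintro ⟨p, hp, hpe⟩
    obtain ⟨f, hf, hpf⟩ := of_decide_eq_true (List.mem_filter.mp hp).2
    exact (Option.some_injective _ (hpf.symm.trans hpe)) ▸ hf
  · obtain ⟨p, hp, hpe⟩ := hJ he
    exact ⟨p, List.mem_filter.mpr ⟨hp, decide_eq_true ⟨e, he, hpe⟩⟩, hpe⟩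

theorem IsEdgeFlow.inGammoid [Fintype V] {F : Set E} {r v : V} {A : Finset E}
    (hA : G.IsEdgeFlow r v A) (hAF : ↑A ⊆ F) (hv : v ≠ r) :
    G.InGammoid F r v ↑{e ∈ A | G.head e = v} := by
  obtain ⟨P, hP, hlast⟩ := hA.exists_isPathSystem hv
  exact inGammoid_iff.mpr ⟨P, hP.mono hAF, hlast⟩

end Digraph'

open Digraph' in
theorem stmt0_general {V E : Type} [Fintype V] [Fintype E] (D : Digraph' V E) (r : V)
    (H : Set E) (u : V) (hu : u ≠ r)
    (hlt : D.lam H r u < D.lam Set.univ r u) :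
    ∃ e ∉ H, ∀ I : Set E, D.InGammoid H r (D.head e) I →
      D.InGammoid (insert e H) r (D.head e) (insert e I) := by
  obtain ⟨e, heH, hv, hgain⟩ := exists_lam_lt_lam_insert hu hlt
  refine ⟨e, heH, fun I hI => ?_⟩
  obtain ⟨P, hP, rfl⟩ := inGammoid_iff.mp hI
  have hPF : ↑P.flatten.toFinset ⊆ insert e H :=
    hP.coe_toFinset_flatten_subset.trans (Set.subset_insert e H)
  obtain ⟨A, hA, hAF, hval, hsub⟩ := (hP.isEdgeFlow hv).1.exists_inCard_eq_lam hPF hv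
  have heA : e ∈ A := by
    by_contra he
    have := hA.inCard_le_lam (fun x hx => (hAF hx).resolve_left (ne_of_mem_of_not_mem hx he)) hv
    omega
  refine (hA.inGammoid hAF hv).subset (Set.insert_subset (by simp [heA]) ?_)
  rw [← hP.filter_head_eq]
  exact coe_subset.mpr hsub

open Digraph' in
/-- Key lemma: if `λ_H(r,u) < λ_D(r,u)` then some edge `e ∉ H` with head `v`
is a coloop of the gammoid `G_{H+e}(v)`. -/
theorem stmt0 {V E : Type} [Fintype V] [Fintype E] (D : Digraph' V E) (r : V)
    (hr : ∀ e, D.head e ≠ r) (H : Set E) (u : V) (hu : u ≠ r)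
    (hlt : D.lam H r u < D.lam Set.univ r u) :
    ∃ e ∉ H, ∀ I : Set E, D.InGammoid H r (D.head e) I →
      D.InGammoid (insert e H) r (D.head e) (insert e I) :=
  stmt0_general D r H u hu hlt
end

section
/- For every finite digraph D with root r, the collection F = { E(F) : F is a subgraph of D which is an r-flame } forms a greedoid on E(D); i.e., the empty edge set is in F, and whenever F₀, F₁ ∈ F with |F₀| < |F₁|, there exists e ∈ F₁\F₀ with F₀ + e ∈ F. -/
attribute [local instance] Classical.propDecidable

/-!
By Menger's theorem every `v ≠ r` has a minimum cut: a set `W ∋ v` avoiding `r` entered by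
exactly `λ_F(r,v)` edges of `F`. Submodularity of the cut function makes the minimum cuts of `v`
closed under union with a minimum cut of any vertex of `W`. Menger's theorem is proved by
augmenting paths, handling path systems through their edge sets: summing out-degree minus
in-degree over `W` counts the edges leaving minus those entering `W`, which bounds path systems
by cuts and lets an edge set with the excess of `k` paths be split into `k` edge-disjoint paths.

Given flames `F₀`, `F₁` with `|F₀| < |F₁|`, as no edge enters `r` some `v ≠ r` has larger
in-degree, hence larger `λ`, in `F₁`. If no `e ∈ F₁ \ F₀` raised `λ_{F₀}` at its head, every
such `e` would have its tail in a minimum cut of its head, so no such `e` could enter the largest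
minimum cut `W` of `v` in `F₀`; then `λ_{F₁}(r,v) ≤ |δ_{F₁}(W)| ≤ |δ_{F₀}(W)| = λ_{F₀}(r,v)`.
An edge raising `λ` at its head keeps `F₀` a flame, since `λ ≤ ϱ` always and `λ` is monotone.
-/

namespace Digraph'

variable {V E : Type} {D : Digraph' V E}

theorem isWalk_append {u v : V} {l₁ l₂ : List E} :
    D.IsWalk u v (l₁ ++ l₂) ↔ ∃ w, D.IsWalk u w l₁ ∧ D.IsWalk w v l₂ := by
  induction l₁ generalizing u with
  | nil => simp [IsWalk]
  | cons e l ih => simp only [List.cons_append, IsWalk, ih, exists_and_left, and_assoc]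

theorem IsPathIn.mono {F F' : Set E} {u v : V} {p : List E} (hp : D.IsPathIn F u v p)
    (hF : F ⊆ F') : D.IsPathIn F' u v p :=
  ⟨hp.1, fun e he => hF (hp.2.1 e he), hp.2.2⟩

theorem IsPathIn.nodup_s1 {F : Set E} {u v : V} {p : List E} (hp : D.IsPathIn F u v p) :
    p.Nodup :=
  (List.nodup_cons.mp hp.2.2).2.of_map _

theorem exists_isPathIn_of_isWalk {F : Set E} {v : V} :
    ∀ {u : V} {es : List E}, D.IsWalk u v es → (∀ e ∈ es, e ∈ F) → ∃ p, D.IsPathIn F u v p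
  | _, [], hw, _ => ⟨[], hw, by simp, by simp⟩
  | _, e :: es, ⟨rfl, hw⟩, hF => by
    obtain ⟨p, hpw, hpF, hpnd⟩ := exists_isPathIn_of_isWalk hw fun f hf => hF f (by simp [hf])
    by_cases hloop : D.tail e = D.head e
    · exact ⟨p, hloop ▸ hpw, hpF, hloop ▸ hpnd⟩
    by_cases hvisit : D.tail e ∈ p.map D.head
    · -- `p` revisits the start of `e`: keep only the part of `p` after that visit
      obtain ⟨f, hf, hft⟩ := List.mem_map.mp hvisit
      obtain ⟨l₁, l₂, rfl⟩ := List.append_of_mem hf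
      obtain ⟨w, -, hw₂⟩ := isWalk_append.mp hpw
      refine ⟨l₂, hft ▸ hw₂.2, fun g hg => hpF g (by simp [hg]), ?_⟩
      have := (List.nodup_cons.mp hpnd).2
      simp only [List.map_append, List.map_cons] at this
      exact hft ▸ (List.nodup_append.mp this).2.1
    · refine ⟨e :: p, ⟨rfl, hpw⟩, ?_, ?_⟩
      · simpa [hF e (by simp)] using hpF
      · exact List.nodup_cons.mpr ⟨by simpa [hloop] using hvisit, hpnd⟩

def ReachableIn (D : Digraph' V E) (F : Set E) (u v : V) : Prop :=
  ∃ es, D.IsWalk u v es ∧ ∀ e ∈ es, e ∈ F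

theorem ReachableIn.refl (D : Digraph' V E) (F : Set E) (u : V) : D.ReachableIn F u u :=
  ⟨[], rfl, by simp⟩

theorem ReachableIn.head {F : Set E} {u : V} {e : E} (h : D.ReachableIn F u (D.tail e))
    (he : e ∈ F) : D.ReachableIn F u (D.head e) := by
  obtain ⟨es, hw, hF⟩ := h
  exact ⟨es ++ [e], isWalk_append.mpr ⟨_, hw, rfl, rfl⟩, by simpa [or_imp, forall_and, he]⟩

theorem ReachableIn.exists_isPathIn {F : Set E} {u v : V} (h : D.ReachableIn F u v) :
    ∃ p, D.IsPathIn F u v p :=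
  h.elim fun _ h => exists_isPathIn_of_isWalk h.1 h.2

def cut (D : Digraph' V E) (F : Set E) (W : Set V) : Set E :=
  {e | e ∈ F ∧ D.head e ∈ W ∧ D.tail e ∉ W}

theorem cut_mono (D : Digraph' V E) {F F' : Set E} (hF : F ⊆ F') (W : Set V) :
    D.cut F W ⊆ D.cut F' W :=
  fun _ he => ⟨hF he.1, he.2⟩

theorem ncard_cut_union_add_ncard_cut_inter_le [Finite E] (D : Digraph' V E) (F : Set E)
    (A B : Set V) :
    (D.cut F (A ∪ B)).ncard + (D.cut F (A ∩ B)).ncard ≤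
      (D.cut F A).ncard + (D.cut F B).ncard := by
  have hunion : D.cut F (A ∪ B) ∪ D.cut F (A ∩ B) ⊆ D.cut F A ∪ D.cut F B := by
    intro e; simp only [cut, Set.mem_union, Set.mem_inter_iff, Set.mem_ofPred_eq]; tauto
  have hinter : D.cut F (A ∪ B) ∩ D.cut F (A ∩ B) ⊆ D.cut F A ∩ D.cut F B := by
    intro e; simp only [cut, Set.mem_union, Set.mem_inter_iff, Set.mem_ofPred_eq]; tauto
  rw [← Set.ncard_union_add_ncard_inter (D.cut F A), ← Set.ncard_union_add_ncard_inter]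
  exact add_le_add (Set.ncard_le_ncard hunion) (Set.ncard_le_ncard hinter)

noncomputable def excess (D : Digraph' V E) (S : Finset E) (u : V) : ℤ :=
  ∑ e ∈ S, ((if D.tail e = u then 1 else 0) - if D.head e = u then 1 else 0)

/-- The excess profile of the edge set of `k` edge-disjoint `r → v` paths. -/
def HasNetFlow (D : Digraph' V E) (S : Finset E) (r v : V) (k : ℤ) : Prop :=
  ∀ u, D.excess S u = k * ((if u = r then 1 else 0) - if u = v then 1 else 0)

theorem excess_union (D : Digraph' V E) {S T : Finset E} (hST : Disjoint S T) (u : V) :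
    D.excess (S ∪ T) u = D.excess S u + D.excess T u :=
  Finset.sum_union hST

theorem excess_sdiff (D : Digraph' V E) {S T : Finset E} (hTS : T ⊆ S) (u : V) :
    D.excess (S \ T) u = D.excess S u - D.excess T u :=
  eq_sub_of_add_eq (Finset.sum_sdiff hTS)

theorem HasNetFlow.union {S T : Finset E} {r v : V} {k l : ℤ} (hS : D.HasNetFlow S r v k)
    (hT : D.HasNetFlow T r v l) (hST : Disjoint S T) : D.HasNetFlow (S ∪ T) r v (k + l) :=
  fun u => by rw [D.excess_union hST, hS, hT, add_mul]

theorem HasNetFlow.sdiff {S T : Finset E} {r v : V} {k l : ℤ} (hS : D.HasNetFlow S r v k)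
    (hT : D.HasNetFlow T r v l) (hTS : T ⊆ S) : D.HasNetFlow (S \ T) r v (k - l) :=
  fun u => by rw [D.excess_sdiff hTS, hS, hT, sub_mul]

theorem hasNetFlow_toFinset_of_isWalk [DecidableEq E] {v : V} :
    ∀ {u : V} {p : List E}, D.IsWalk u v p → p.Nodup → D.HasNetFlow p.toFinset u v 1
  | _, [], rfl, _ => fun w => by simp [excess]
  | _, e :: p, ⟨rfl, hw⟩, hnd => fun w => by
    obtain ⟨he, hnd⟩ := List.nodup_cons.mp hnd
    have ih := hasNetFlow_toFinset_of_isWalk hw hnd w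
    rw [excess, List.toFinset_cons, Finset.sum_insert (by simpa using he), ← excess, ih]
    by_cases h₁ : w = D.tail e <;> by_cases h₂ : w = D.head e <;> by_cases h₃ : w = v <;>
      simp [h₁, h₂, h₃, eq_comm]

theorem IsPathIn.hasNetFlow [DecidableEq E] {F : Set E} {u v : V} {p : List E}
    (hp : D.IsPathIn F u v p) : D.HasNetFlow p.toFinset u v 1 :=
  hasNetFlow_toFinset_of_isWalk hp.1 hp.nodup_s1

theorem hasNetFlow_flatten {F : Set E} {r v : V} :
    ∀ {P : List (List E)}, (∀ p ∈ P, D.IsPathIn F r v p) → EdgeDisjoint P →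
      D.HasNetFlow P.flatten.toFinset r v P.length
  | [], _, _ => fun u => by simp [excess]
  | p :: P, hP, hd => by
    obtain ⟨hpP, hd⟩ := List.pairwise_cons.mp hd
    have hdisj : Disjoint p.toFinset P.flatten.toFinset := by
      simp only [Finset.disjoint_left, List.mem_toFinset, List.mem_flatten, not_exists, not_and]
      exact fun e hep q hq heq => hpP q hq e hep heq
    have := (hP p (by simp)).hasNetFlow.union
      (hasNetFlow_flatten (fun q hq => hP q (by simp [hq])) hd) hdisj
    simpa [List.toFinset_append, add_comm] using this

theorem ncard_cut_coe (D : Digraph' V E) (S : Finset E) (W : Set V) :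
    (D.cut ↑S W).ncard = (S.filter fun e => D.head e ∈ W ∧ D.tail e ∉ W).card := by
  rw [← Set.ncard_coe_finset]
  congr 1
  ext e
  simp [cut]

theorem sum_excess [Fintype V] (D : Digraph' V E) (S : Finset E) (W : Set V) :
    ∑ u ∈ W.toFinset, D.excess S u = ((D.cut ↑S Wᶜ).ncard : ℤ) - (D.cut ↑S W).ncard := by
  simp only [ncard_cut_coe, Finset.card_filter, excess, Nat.cast_sum]
  rw [Finset.sum_comm, ← Finset.sum_sub_distrib]
  refine Finset.sum_congr rfl fun e _ => ?_
  simp only [Finset.sum_sub_distrib, Finset.sum_ite_eq, Set.mem_toFinset, Set.mem_compl_iff]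
  by_cases ht : D.tail e ∈ W <;> by_cases hh : D.head e ∈ W <;> simp [ht, hh]

theorem HasNetFlow.ncard_cut_sub [Fintype V] {S : Finset E} {r v : V} {k : ℤ}
    (hS : D.HasNetFlow S r v k) (W : Set V) :
    ((D.cut ↑S Wᶜ).ncard : ℤ) - (D.cut ↑S W).ncard =
      k * ((if r ∈ W then 1 else 0) - if v ∈ W then 1 else 0) := by
  rw [← sum_excess, Finset.sum_congr rfl fun u _ => hS u, ← Finset.mul_sum,
    Finset.sum_sub_distrib, Finset.sum_ite_eq', Finset.sum_ite_eq']
  simp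

theorem reachableIn_of_excess [Fintype V] {S : Finset E} {x v : V}
    (hS : ∀ u, u ≠ v → 0 ≤ D.excess S u) (hx : 0 < D.excess S x) : D.ReachableIn ↑S x v := by
  by_contra hv
  set R := {u | D.ReachableIn ↑S x u}
  have hclosed : D.cut ↑S Rᶜ = ∅ := by
    ext e
    simp only [cut, Set.mem_compl_iff, not_not, Set.mem_ofPred_eq, Set.mem_empty_iff_false,
      iff_false, not_and]
    exact fun he hh ht => hh (ht.head he)
  have hsum := D.sum_excess S R
  have hle : D.excess S x ≤ ∑ u ∈ R.toFinset, D.excess S u :=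
    Finset.single_le_sum (fun u hu => hS u fun huv => hv (huv ▸ by simpa [R] using hu))
      (by simpa [R] using ReachableIn.refl D _ x)
  rw [hclosed, Set.ncard_empty] at hsum
  omega

theorem HasNetFlow.exists_pathSystem [Fintype V] {A : Finset E} {r v : V} {k : ℕ}
    (hA : D.HasNetFlow A r v k) (hvr : v ≠ r) :
    ∃ P : List (List E), P.length = k ∧ (∀ p ∈ P, D.IsPathIn ↑A r v p) ∧ EdgeDisjoint P := by
  induction k generalizing A with
  | zero => exact ⟨[], rfl, by simp, List.Pairwise.nil⟩
  | succ k ih =>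
    have hreach : D.ReachableIn ↑A r v :=
      reachableIn_of_excess
        (fun u hu => by rw [hA u, if_neg hu]; split_ifs <;> norm_num; positivity)
        (by simp [hA r, hvr.symm])
    obtain ⟨p, hp⟩ := hreach.exists_isPathIn
    have hpA : p.toFinset ⊆ A := fun e he => hp.2.1 e (List.mem_toFinset.mp he)
    obtain ⟨P, hlen, hP, hd⟩ :=
      ih (A := A \ p.toFinset) (by simpa using hA.sdiff hp.hasNetFlow hpA)
    refine ⟨p :: P, by simp [hlen], ?_, List.pairwise_cons.mpr ⟨?_, hd⟩⟩
    · intro q hq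
      rcases List.mem_cons.mp hq with rfl | hq
      · exact hp
      · exact (hP q hq).mono (Finset.coe_subset.mpr Finset.sdiff_subset)
    · exact fun q hq e hep heq =>
        (Finset.mem_sdiff.mp ((hP q hq).2.1 e heq)).2 (List.mem_toFinset.mpr hep)

def resid (D : Digraph' V E) : Digraph' V (E ⊕ E) :=
  ⟨Sum.elim D.tail D.head, Sum.elim D.head D.tail⟩

theorem excess_resid (D : Digraph' V E) (T : Finset (E ⊕ E)) (u : V) :
    D.resid.excess T u = D.excess T.toLeft u - D.excess T.toRight u := by
  rw [excess, Finset.sum_sum_eq_sum_toLeft_add_sum_toRight, sub_eq_add_neg, excess, excess,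
    ← Finset.sum_neg_distrib]
  simp only [neg_sub]
  rfl

theorem HasNetFlow.augment {S : Finset E} {T : Finset (E ⊕ E)} {r v : V} {k : ℤ}
    (hS : D.HasNetFlow S r v k) (hT : D.resid.HasNetFlow T r v 1) (hback : T.toRight ⊆ S)
    (hfwd : Disjoint S T.toLeft) : D.HasNetFlow (S \ T.toRight ∪ T.toLeft) r v (k + 1) := by
  intro u
  have hTu := hT u
  rw [excess_resid] at hTu
  rw [D.excess_union (hfwd.mono_left Finset.sdiff_subset), D.excess_sdiff hback]
  linear_combination hS u + hTu

section Menger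

variable [Fintype V] [Finite E]

theorem length_le_ncard_cut {F : Set E} {W : Set V} {r v : V} {P : List (List E)}
    (hP : ∀ p ∈ P, D.IsPathIn F r v p) (hd : EdgeDisjoint P) (hr : r ∉ W) (hv : v ∈ W) :
    P.length ≤ (D.cut F W).ncard := by
  have hflow := (hasNetFlow_flatten hP hd).ncard_cut_sub W
  rw [if_neg hr, if_pos hv] at hflow
  have hsub : D.cut ↑P.flatten.toFinset W ⊆ D.cut F W := D.cut_mono (fun e he => by
    obtain ⟨p, hp, hep⟩ := List.mem_flatten.mp (List.mem_toFinset.mp he)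
    exact (hP p hp).2.1 e hep) W
  have := Set.ncard_le_ncard hsub
  omega

theorem lam_bddAbove (D : Digraph' V E) (F : Set E) {r v : V} (hvr : v ≠ r) :
    BddAbove {k | ∃ P : List (List E), P.length = k ∧ (∀ p ∈ P, D.IsPathIn F r v p) ∧
      EdgeDisjoint P} :=
  ⟨(D.cut F {v}).ncard, by
    rintro _ ⟨P, rfl, hP, hd⟩
    exact length_le_ncard_cut hP hd (by simpa using hvr.symm) rfl⟩

theorem exists_pathSystem_length_eq_lam (D : Digraph' V E) (F : Set E) {r v : V}
    (hvr : v ≠ r) :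
    ∃ P : List (List E), P.length = D.lam F r v ∧ (∀ p ∈ P, D.IsPathIn F r v p) ∧
      EdgeDisjoint P := by
  refine Nat.sSup_mem ?_ (D.lam_bddAbove F hvr)
  exact ⟨0, [], rfl, by simp, List.Pairwise.nil⟩

theorem length_le_lam {F : Set E} {r v : V} (hvr : v ≠ r) {P : List (List E)}
    (hP : ∀ p ∈ P, D.IsPathIn F r v p) (hd : EdgeDisjoint P) : P.length ≤ D.lam F r v :=
  le_csSup (D.lam_bddAbove F hvr) ⟨P, rfl, hP, hd⟩

theorem lam_le_ncard_cut (D : Digraph' V E) (F : Set E) {W : Set V} {r v : V} (hr : r ∉ W)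
    (hv : v ∈ W) : D.lam F r v ≤ (D.cut F W).ncard := by
  obtain ⟨P, hlen, hP, hd⟩ := D.exists_pathSystem_length_eq_lam F fun h : v = r => hr (h ▸ hv)
  exact hlen ▸ length_le_ncard_cut hP hd hr hv

theorem lam_mono (D : Digraph' V E) {F F' : Set E} (hF : F ⊆ F') {r v : V} (hvr : v ≠ r) :
    D.lam F r v ≤ D.lam F' r v := by
  obtain ⟨P, hlen, hP, hd⟩ := D.exists_pathSystem_length_eq_lam F hvr
  exact hlen ▸ length_le_lam hvr (fun p hp => (hP p hp).mono hF) hd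

theorem lam_le_indeg (D : Digraph' V E) (F : Set E) {r v : V} (hvr : v ≠ r) :
    D.lam F r v ≤ D.indeg F v :=
  (D.lam_le_ncard_cut F (W := {v}) (by simpa using hvr.symm) rfl).trans
    (Set.ncard_le_ncard fun _ he => ⟨he.1, he.2.1⟩)

/-- The residual edges for a path system with edge set `S`: edges of `F` outside `S` forwards,
edges of `S` backwards. -/
def residEdges (F : Set E) (S : Finset E) : Set (E ⊕ E) :=
  {s | Sum.elim (fun e => e ∈ F ∧ e ∉ S) (· ∈ S) s}

theorem add_one_le_lam_of_reachableIn_resid {F : Set E} {S : Finset E} {r v : V} {k : ℕ}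
    (hvr : v ≠ r) (hSF : ↑S ⊆ F) (hS : D.HasNetFlow S r v k)
    (hv : D.resid.ReachableIn (residEdges F S) r v) : k + 1 ≤ D.lam F r v := by
  obtain ⟨ρ, hρ⟩ := hv.exists_isPathIn
  have hA := hS.augment hρ.hasNetFlow
    (fun e he => hρ.2.1 _ (List.mem_toFinset.mp (Finset.mem_toRight.mp he)))
    (Finset.disjoint_right.mpr fun e he =>
      (hρ.2.1 _ (List.mem_toFinset.mp (Finset.mem_toLeft.mp he))).2)
  obtain ⟨P, hlen, hP, hd⟩ := HasNetFlow.exists_pathSystem (k := k + 1) (by exact_mod_cast hA) hvr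
  have hAF : ↑(S \ ρ.toFinset.toRight ∪ ρ.toFinset.toLeft) ⊆ F := by
    intro e he
    simp only [Finset.coe_union, Finset.coe_sdiff, Set.mem_union, Set.mem_sdiff,
      Finset.mem_coe, Finset.mem_toLeft, List.mem_toFinset] at he
    exact he.elim (fun he => hSF he.1) fun he => (hρ.2.1 _ he).1
  exact hlen ▸ length_le_lam hvr (fun p hp => (hP p hp).mono hAF) hd

/-- Menger's theorem. For a maximum path system with edge set `S`, the vertices not reachable
from `r` by residual edges form the cut: each of its edges lies in `S`, and no edge of `S`
leaves it. -/
theorem exists_ncard_cut_le_lam (D : Digraph' V E) (F : Set E) {r v : V} (hvr : v ≠ r) :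
    ∃ W, v ∈ W ∧ r ∉ W ∧ (D.cut F W).ncard ≤ D.lam F r v := by
  obtain ⟨P, hlen, hP, hd⟩ := D.exists_pathSystem_length_eq_lam F hvr
  set S := P.flatten.toFinset
  have hSF : ↑S ⊆ F := fun e he => by
    obtain ⟨p, hp, hep⟩ := List.mem_flatten.mp (List.mem_toFinset.mp he)
    exact (hP p hp).2.1 e hep
  have hS : D.HasNetFlow S r v (D.lam F r v) := hlen ▸ hasNetFlow_flatten hP hd
  set R := {x | D.resid.ReachableIn (residEdges F S) r x}
  have hvR : v ∉ R := fun hv =>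
    Nat.not_succ_le_self _ (add_one_le_lam_of_reachableIn_resid hvr hSF hS hv)
  have hrR : r ∈ R := ReachableIn.refl _ _ r
  refine ⟨Rᶜ, hvR, not_not.mpr hrR, ?_⟩
  have hin : D.cut ↑S R = ∅ :=
    Set.eq_empty_of_forall_notMem fun e ⟨heS, hh, ht⟩ =>
      ht (ReachableIn.head (e := Sum.inr e) hh heS)
  have hout : D.cut F Rᶜ ⊆ D.cut ↑S Rᶜ := by
    rintro e ⟨heF, hh, ht⟩
    refine ⟨by_contra fun heS => hh ?_, hh, ht⟩
    exact ReachableIn.head (e := Sum.inl e) (not_not.mp ht) ⟨heF, heS⟩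
  have hflow := hS.ncard_cut_sub R
  rw [hin, if_pos hrR, if_neg hvR] at hflow
  simp only [Set.ncard_empty, Nat.cast_zero, sub_zero, mul_one] at hflow
  have := Set.ncard_le_ncard hout
  omega

end Menger

def IsMinCut (D : Digraph' V E) (F : Set E) (r v : V) (W : Set V) : Prop :=
  v ∈ W ∧ r ∉ W ∧ (D.cut F W).ncard = D.lam F r v

section MinCut

variable [Fintype V] [Finite E]

theorem exists_isMinCut (D : Digraph' V E) (F : Set E) {r v : V} (hvr : v ≠ r) :
    ∃ W, D.IsMinCut F r v W := by
  obtain ⟨W, hv, hr, hle⟩ := D.exists_ncard_cut_le_lam F hvr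
  exact ⟨W, hv, hr, le_antisymm hle (D.lam_le_ncard_cut F hr hv)⟩

theorem IsMinCut.union {F : Set E} {r v w : V} {W W' : Set V} (hW : D.IsMinCut F r v W)
    (hW' : D.IsMinCut F r w W') (hw : w ∈ W) : D.IsMinCut F r v (W ∪ W') := by
  have hsub := D.ncard_cut_union_add_ncard_cut_inter_le F W W'
  have hunion := D.lam_le_ncard_cut F (W := W ∪ W') (r := r) (v := v)
    (by simp [hW.2.1, hW'.2.1]) (Or.inl hW.1)
  have hinter := D.lam_le_ncard_cut F (W := W ∩ W') (r := r) (v := w)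
    (fun h => hW.2.1 h.1) ⟨hw, hW'.1⟩
  exact ⟨Or.inl hW.1, by simp [hW.2.1, hW'.2.1], by linarith [hW.2.2, hW'.2.2]⟩

theorem exists_isMinCut_tail_mem {F : Set E} {r : V} {e : E} (he : e ∉ F)
    (hr : D.head e ≠ r) (hle : D.lam (insert e F) r (D.head e) ≤ D.lam F r (D.head e)) :
    ∃ W, D.IsMinCut F r (D.head e) W ∧ D.tail e ∈ W := by
  obtain ⟨W, hh, hrW, hW⟩ := D.exists_isMinCut (insert e F) hr
  have hsub : D.cut F W ⊆ D.cut (insert e F) W := D.cut_mono (Set.subset_insert e F) W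
  have hmono := Set.ncard_le_ncard hsub
  have hlam := D.lam_le_ncard_cut F hrW hh
  refine ⟨W, ⟨hh, hrW, by omega⟩, by_contra fun ht => ?_⟩
  have hlt := Set.ncard_lt_ncard <| (Set.ssubset_iff_of_subset hsub).mpr
    ⟨e, ⟨Set.mem_insert e F, hh, ht⟩, fun h => he h.1⟩
  omega

theorem exists_lam_lt_lam_insert_s1 {F₀ F₁ : Set E} {r v : V} (hvr : v ≠ r)
    (hlt : D.lam F₀ r v < D.lam F₁ r v) :
    ∃ e ∈ F₁ \ F₀, D.lam F₀ r (D.head e) < D.lam (insert e F₀) r (D.head e) := by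
  by_contra! hcon
  obtain ⟨W, hW⟩ := Set.Finite.exists_maximal (Set.toFinite {W | D.IsMinCut F₀ r v W})
    (D.exists_isMinCut F₀ hvr)
  have hcut : D.cut F₁ W ⊆ D.cut F₀ W := by
    rintro e ⟨he₁, hh, ht⟩
    refine ⟨by_contra fun he₀ => ?_, hh, ht⟩
    obtain ⟨W', hW', htW'⟩ := exists_isMinCut_tail_mem he₀
      (fun h : D.head e = r => hW.1.2.1 (h ▸ hh)) (hcon e ⟨he₁, he₀⟩)
    exact ht (hW.2 (hW.1.union hW' hh) Set.subset_union_left (Or.inr htW'))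
  have := calc D.lam F₁ r v ≤ (D.cut F₁ W).ncard := D.lam_le_ncard_cut F₁ hW.1.2.1 hW.1.1
    _ ≤ (D.cut F₀ W).ncard := Set.ncard_le_ncard hcut
    _ = D.lam F₀ r v := hW.1.2.2
  omega

end MinCut

theorem indeg_insert [Finite E] {F : Set E} {e : E} (he : e ∉ F) (u : V) :
    D.indeg (insert e F) u = D.indeg F u + if D.head e = u then 1 else 0 := by
  by_cases h : D.head e = u
  · have : D.inEdges (insert e F) u = insert e (D.inEdges F u) := by
      ext f; simp only [inEdges, Set.mem_insert_iff, Set.mem_sep_iff]; aesop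
    rw [if_pos h, indeg, this, Set.ncard_insert_of_notMem fun h => he h.1, indeg]
  · have : D.inEdges (insert e F) u = D.inEdges F u := by
      ext f; simp only [inEdges, Set.mem_insert_iff, Set.mem_sep_iff]; aesop
    rw [if_neg h, indeg, this, indeg, add_zero]

theorem exists_indeg_lt [Fintype V] {F₀ F₁ : Finset E} {r : V} (hr : ∀ e, D.head e ≠ r)
    (hcard : F₀.card < F₁.card) : ∃ v, v ≠ r ∧ D.indeg ↑F₀ v < D.indeg ↑F₁ v := by
  have hindeg (F : Finset E) (v : V) : D.indeg ↑F v = (F.filter (D.head · = v)).card := by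
    rw [indeg, ← Set.ncard_coe_finset]; congr 1; ext; simp [inEdges]
  by_contra! hle
  refine hcard.not_ge ?_
  rw [Finset.card_eq_sum_card_fiberwise fun e _ => Finset.mem_univ (D.head e),
    Finset.card_eq_sum_card_fiberwise (t := Finset.univ) fun e _ => Finset.mem_univ (D.head e)]
  refine Finset.sum_le_sum fun v _ => ?_
  by_cases hv : v = r
  · simp [Finset.filter_false_of_mem fun e _ => hv ▸ hr e]
  · simpa [hindeg] using hle v hv

section Flame

variable [Fintype V] [Finite E]

theorem isFlame_empty (D : Digraph' V E) (r : V) : D.IsFlame r ∅ := fun v hv => by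
  have := D.lam_le_indeg ∅ hv
  simp only [indeg, inEdges, Set.mem_empty_iff_false, false_and, Set.ofPred_false,
    Set.ncard_empty] at this ⊢
  omega

theorem IsFlame.insert {F : Set E} {r : V} {e : E} (hF : D.IsFlame r F) (he : e ∉ F)
    (hlt : D.lam F r (D.head e) < D.lam (insert e F) r (D.head e)) :
    D.IsFlame r (insert e F) := by
  intro w hw
  refine le_antisymm ?_ (D.lam_le_indeg _ hw)
  rw [indeg_insert he]
  by_cases h : D.head e = w
  · subst h; rw [if_pos rfl, hF _ hw]; omega
  · rw [if_neg h, add_zero, hF w hw]; exact D.lam_mono (Set.subset_insert e F) hw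

end Flame

end Digraph'

open Digraph' in
/-- The edge sets of `r`-flame subgraphs of `D` form a greedoid. -/
theorem stmt1 {V E : Type} [Fintype V] [Fintype E] (D : Digraph' V E) (r : V)
    (hr : ∀ e, D.head e ≠ r) :
    D.IsFlame r (↑(∅ : Finset E)) ∧
    ∀ F₀ F₁ : Finset E, D.IsFlame r ↑F₀ → D.IsFlame r ↑F₁ →
      F₀.card < F₁.card →
      ∃ e ∈ F₁ \ F₀, D.IsFlame r ↑(insert e F₀) := by
  refine ⟨by simpa using D.isFlame_empty r, fun F₀ F₁ h₀ h₁ hcard => ?_⟩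
  obtain ⟨v, hvr, hv⟩ := exists_indeg_lt hr hcard
  obtain ⟨e, he, hlt⟩ := exists_lam_lt_lam_insert_s1 hvr (h₀ v hvr ▸ h₁ v hvr ▸ hv)
  have he' : e ∈ F₁ \ F₀ := by simpa using he
  refine ⟨e, he', ?_⟩
  rw [Finset.coe_insert]
  exact h₀.insert (by simpa using (Finset.mem_sdiff.mp he').2) hlt
end
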